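/- arXiv:2406.12825 — 6 statements merged into one kernel-verified Lean document; each statement's English description precedes it below -/
import Mathlib

section
/- Let μ be Lebesgue measure on ℝ² × [0,∞) (momentum q and frequency Ω), let R : ℝ² → ℝ² be rotation by π/2, R(q₁,q₂) = (−q₂,q₁), and let f(x) = x − log(1+x) for x ≥ 0. Suppose Q : ℝ² × [0,∞) → [0,∞) is continuous, the functions (q,Ω) ↦ f(2Q(q,Ω)) and (q,Ω) ↦ f(Q(q,Ω) + Q(Rq,Ω)) are μ-integrable, and there exists a point (q₀,Ω₀) with Q(q₀,Ω₀) ≠ Q(Rq₀,Ω₀). Then ∫ f(Q(q,Ω) + Q(Rq,Ω)) dμ < ∫ f(2Q(q,Ω)) dμ. -/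
open MeasureTheory

private lemma log_key_le {a b : ℝ} (ha : 0 ≤ a) (hb : 0 ≤ b) :
    Real.log (1 + 2 * a) + Real.log (1 + 2 * b) ≤ 2 * Real.log (1 + (a + b)) := by
  have h1 : (0:ℝ) < 1 + 2 * a := by linarith
  have h2 : (0:ℝ) < 1 + 2 * b := by linarith
  have hmul : (1 + 2 * a) * (1 + 2 * b) ≤ (1 + (a + b)) ^ 2 := by nlinarith [sq_nonneg (a - b)]
  calc Real.log (1 + 2 * a) + Real.log (1 + 2 * b)
      = Real.log ((1 + 2 * a) * (1 + 2 * b)) := (Real.log_mul h1.ne' h2.ne').symm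
    _ ≤ Real.log ((1 + (a + b)) ^ 2) := Real.log_le_log (by positivity) hmul
    _ = 2 * Real.log (1 + (a + b)) := by rw [Real.log_pow]; norm_num

private lemma log_key_lt {a b : ℝ} (ha : 0 ≤ a) (hb : 0 ≤ b) (hab : a ≠ b) :
    Real.log (1 + 2 * a) + Real.log (1 + 2 * b) < 2 * Real.log (1 + (a + b)) := by
  have h1 : (0:ℝ) < 1 + 2 * a := by linarith
  have h2 : (0:ℝ) < 1 + 2 * b := by linarith
  have hsq : 0 < (a - b) ^ 2 := by
    have : a - b ≠ 0 := sub_ne_zero.mpr hab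
    positivity
  have hmul : (1 + 2 * a) * (1 + 2 * b) < (1 + (a + b)) ^ 2 := by nlinarith
  calc Real.log (1 + 2 * a) + Real.log (1 + 2 * b)
      = Real.log ((1 + 2 * a) * (1 + 2 * b)) := (Real.log_mul h1.ne' h2.ne').symm
    _ < Real.log ((1 + (a + b)) ^ 2) := Real.log_lt_log (by positivity) hmul
    _ = 2 * Real.log (1 + (a + b)) := by rw [Real.log_pow]; norm_num

/-- Theorem 1 of the paper (RPA correlation energy comparison).  Let `μ` be Lebesgue measure
restricted to `ℝ² × [0,∞)`, `R` rotation by `π/2`, and `f x = x − log(1+x)`.  If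
`Q : ℝ² × [0,∞) → [0,∞)` is continuous, `f(2Q)` and `f(Q + Q∘R)` are `μ`-integrable, and
`Q(q₀,Ω₀) ≠ Q(Rq₀,Ω₀)` at some point of the domain, then
`∫ f(Q + Q∘R) dμ < ∫ f(2Q) dμ`. -/
theorem rpa_valley_lt_spin
    (Q : (ℝ × ℝ) × ℝ → ℝ) (hQcont : Continuous Q) (hQnn : ∀ p, 0 ≤ Q p)
    (μ : Measure ((ℝ × ℝ) × ℝ))
    (hμ : μ = volume.restrict {p : (ℝ × ℝ) × ℝ | 0 ≤ p.2})
    (R : ℝ × ℝ → ℝ × ℝ) (hR : ∀ q : ℝ × ℝ, R q = (-q.2, q.1))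
    (f : ℝ → ℝ) (hf : ∀ x : ℝ, f x = x - Real.log (1 + x))
    (hint₁ : Integrable (fun p => f (2 * Q p)) μ)
    (hint₂ : Integrable (fun p => f (Q p + Q (R p.1, p.2))) μ)
    (hne : ∃ p : (ℝ × ℝ) × ℝ, 0 ≤ p.2 ∧ Q p ≠ Q (R p.1, p.2)) :
    ∫ p, f (Q p + Q (R p.1, p.2)) ∂μ < ∫ p, f (2 * Q p) ∂μ := by
  classical
  -- The rotation as a measurable equivalence
  let e : (ℝ × ℝ) ≃ᵐ (ℝ × ℝ) :=
    MeasurableEquiv.prodComm.trans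
      ((MeasurableEquiv.neg ℝ).prodCongr (MeasurableEquiv.refl ℝ))
  have he_eq : ∀ q : ℝ × ℝ, e q = (-q.2, q.1) := fun q => rfl
  let T : ((ℝ × ℝ) × ℝ) ≃ᵐ ((ℝ × ℝ) × ℝ) := e.prodCongr (MeasurableEquiv.refl ℝ)
  have hT_eq : ∀ p : (ℝ × ℝ) × ℝ, T p = ((-p.1.2, p.1.1), p.2) := fun p => rfl
  -- T preserves volume
  have he_pres : MeasurePreserving e volume volume := by
    have h1 : MeasurePreserving (Prod.map (Neg.neg : ℝ → ℝ) (id : ℝ → ℝ))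
        ((volume : Measure ℝ).prod volume) ((volume : Measure ℝ).prod volume) :=
      (Measure.measurePreserving_neg _).prod (MeasurePreserving.id _)
    have h2 : MeasurePreserving (Prod.swap : ℝ × ℝ → ℝ × ℝ)
        ((volume : Measure ℝ).prod volume) ((volume : Measure ℝ).prod volume) :=
      Measure.measurePreserving_swap
    have h3 := h1.comp h2
    have hfun : (Prod.map (Neg.neg : ℝ → ℝ) (id : ℝ → ℝ)) ∘ Prod.swap = ⇑e := by
      funext q; simp [he_eq, Prod.map, Prod.swap]
    rw [Measure.volume_eq_prod]
    rwa [hfun] at h3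
  have hT_pres : MeasurePreserving T volume volume := by
    have h1 : MeasurePreserving (Prod.map ⇑e (id : ℝ → ℝ))
        ((volume : Measure (ℝ × ℝ)).prod volume) ((volume : Measure (ℝ × ℝ)).prod volume) :=
      he_pres.prod (MeasurePreserving.id _)
    have hfun : (Prod.map ⇑e (id : ℝ → ℝ)) = ⇑T := by
      funext p; rfl
    rw [Measure.volume_eq_prod]
    rwa [hfun] at h1
  -- T preserves μ
  have hSmeas : MeasurableSet {p : (ℝ × ℝ) × ℝ | 0 ≤ p.2} :=
    measurableSet_le measurable_const measurable_snd
  have hT_preim : (⇑T) ⁻¹' {p : (ℝ × ℝ) × ℝ | 0 ≤ p.2} = {p : (ℝ × ℝ) × ℝ | 0 ≤ p.2} := by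
    ext p; simp [hT_eq]
  have hTμ : MeasurePreserving T μ μ := by
    rw [hμ]
    have := hT_pres.restrict_preimage hSmeas
    rwa [hT_preim] at this
  -- The comparison function g
  set g : ((ℝ × ℝ) × ℝ) → ℝ :=
    fun p => (f (2 * Q p) + f (2 * Q (T p))) / 2 - f (Q p + Q (T p)) with hg_def
  have hQT : ∀ p : (ℝ × ℝ) × ℝ, Q (R p.1, p.2) = Q (T p) := by
    intro p; rw [hT_eq, hR]
  -- g is nonnegative
  have hg_nonneg : ∀ p, 0 ≤ g p := by
    intro p
    have := log_key_le (hQnn p) (hQnn (T p))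
    simp only [hg_def, hf]
    linarith
  -- g is positive at the witness point
  obtain ⟨p₀, hp₀2, hp₀ne⟩ := hne
  have hg_pos : 0 < g p₀ := by
    have hne' : Q p₀ ≠ Q (T p₀) := by rwa [← hQT]
    have := log_key_lt (hQnn p₀) (hQnn (T p₀)) hne'
    simp only [hg_def, hf]
    linarith
  -- g is continuous
  have hlogc : ∀ u : ((ℝ × ℝ) × ℝ) → ℝ, Continuous u → (∀ p, 0 ≤ u p) →
      Continuous (fun p => f (u p)) := by
    intro u hu hunn
    simp only [hf]
    refine hu.sub (Continuous.log (continuous_const.add hu) ?_)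
    intro p; have := hunn p; positivity
  have hTcont : Continuous (⇑T) := by
    have : ⇑T = fun p : (ℝ × ℝ) × ℝ => (((-p.1.2, p.1.1) : ℝ × ℝ), p.2) := by
      funext p; exact hT_eq p
    rw [this]
    exact (((continuous_snd.comp continuous_fst).neg).prodMk
      (continuous_fst.comp continuous_fst)).prodMk continuous_snd
  have hQTc : Continuous fun p : (ℝ × ℝ) × ℝ => Q (T p) := hQcont.comp hTcont
  have hg_cont : Continuous g := by
    refine Continuous.sub (Continuous.div_const (Continuous.add ?_ ?_) 2) ?_
    · exact hlogc _ (continuous_const.mul hQcont) (fun p => by have := hQnn p; positivity)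
    · exact hlogc _ (continuous_const.mul hQTc) (fun p => by have := hQnn (T p); positivity)
    · exact hlogc _ (hQcont.add hQTc) (fun p => add_nonneg (hQnn p) (hQnn (T p)))
  -- Integrability
  have hint₁' : Integrable (fun p => f (2 * Q (T p))) μ := by
    have := (hTμ.integrable_comp_emb T.measurableEmbedding
      (g := fun p => f (2 * Q p))).mpr hint₁
    exact this
  have hint₂' : Integrable (fun p => f (Q p + Q (T p))) μ := by
    have : (fun p => f (Q p + Q (T p))) = fun p => f (Q p + Q (R p.1, p.2)) := by
      funext p; rw [hQT]
    rw [this]; exact hint₂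
  have hg_int : Integrable g μ := ((hint₁.add hint₁').div_const 2).sub hint₂'
  -- positivity of ∫ g
  have hU : IsOpen ({p : (ℝ × ℝ) × ℝ | 0 < g p} ∩ {p | 0 < p.2}) :=
    (isOpen_lt continuous_const hg_cont).inter (isOpen_lt continuous_const continuous_snd)
  have hUne : ({p : (ℝ × ℝ) × ℝ | 0 < g p} ∩ {p | 0 < p.2}).Nonempty := by
    have hopen : IsOpen {p : (ℝ × ℝ) × ℝ | 0 < g p} := isOpen_lt continuous_const hg_cont
    obtain ⟨ε, hε, hball⟩ := Metric.isOpen_iff.mp hopen p₀ hg_pos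
    refine ⟨(p₀.1, p₀.2 + ε / 2), hball ?_, ?_⟩
    · rw [Metric.mem_ball]
      have : dist ((p₀.1, p₀.2 + ε / 2) : (ℝ × ℝ) × ℝ) p₀
          = max (dist p₀.1 p₀.1) (dist (p₀.2 + ε / 2) p₀.2) := rfl
      rw [this]
      simp only [dist_self, Real.dist_eq, add_sub_cancel_left]
      rw [abs_of_pos (by linarith)]
      rw [max_lt_iff]
      constructor <;> linarith
    · show (0:ℝ) < p₀.2 + ε / 2
      linarith
  have hμU : 0 < μ ({p : (ℝ × ℝ) × ℝ | 0 < g p} ∩ {p | 0 < p.2}) := by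
    rw [hμ, Measure.restrict_apply' hSmeas]
    have hsub : ({p : (ℝ × ℝ) × ℝ | 0 < g p} ∩ {p | 0 < p.2})
        ⊆ ({p : (ℝ × ℝ) × ℝ | 0 < g p} ∩ {p | 0 < p.2}) ∩ {p | 0 ≤ p.2} := by
      intro p hp
      refine ⟨hp, ?_⟩
      have h2 : 0 < p.2 := hp.2
      exact le_of_lt h2
    calc (0 : ENNReal) < volume ({p : (ℝ × ℝ) × ℝ | 0 < g p} ∩ {p | 0 < p.2}) :=
          hU.measure_pos volume hUne
      _ ≤ _ := measure_mono hsub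
  have hint_pos : 0 < ∫ p, g p ∂μ := by
    rw [integral_pos_iff_support_of_nonneg hg_nonneg hg_int]
    refine lt_of_lt_of_le hμU (measure_mono ?_)
    intro p hp
    exact (hp.1 : 0 < g p).ne'
  -- ∫ f(2 Q (T p)) dμ = ∫ f(2 Q p) dμ
  have hswap : ∫ p, f (2 * Q (T p)) ∂μ = ∫ p, f (2 * Q p) ∂μ :=
    hTμ.integral_comp T.measurableEmbedding (fun p => f (2 * Q p))
  -- finish
  have hdecomp : ∫ p, g p ∂μ
      = (∫ p, f (2 * Q p) ∂μ + ∫ p, f (2 * Q (T p)) ∂μ) / 2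
        - ∫ p, f (Q p + Q (T p)) ∂μ := by
    have h1 : ∀ p, g p = (f (2 * Q p) + f (2 * Q (T p))) / 2 - f (Q p + Q (T p)) :=
      fun p => rfl
    simp only [h1]
    have hiA : Integrable (fun p => (f (2 * Q p) + f (2 * Q (T p))) / 2) μ :=
      (hint₁.add hint₁').div_const 2
    rw [integral_sub hiA hint₂', integral_div, integral_add hint₁ hint₁']
  have hfin : ∫ p, f (Q p + Q (T p)) ∂μ = ∫ p, f (Q p + Q (R p.1, p.2)) ∂μ := by
    congr 1; funext p; rw [hQT]
  rw [hdecomp, hswap, hfin] at hint_pos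
  linarith
end

section
/- Let (M,μ) be a measure space, let g : M → M be a measurable map that preserves μ (the pushforward of μ under g equals μ), let Z₁ : M → [0,∞) be integrable and set Z₂ = Z₁ ∘ g, and let f : [0,∞) → ℝ be a convex function such that f ∘ (2Z₁) and f ∘ (Z₁ + Z₂) are μ-integrable. Then ∫_M f(Z₁ + Z₂) dμ ≤ ∫_M f(2Z₁) dμ. -/
/-!
Midpoint convexity gives `f (Z₁ + Z₂) ≤ (f (2 Z₁) + f (2 Z₂)) / 2` pointwise, and since `g`
preserves `μ`, the two integrals on the right agree.
-/

open MeasureTheory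

theorem ConvexOn.map_add_le_half_add_two_smul {E : Type*} [AddCommGroup E] [Module ℝ E]
    {s : Set E} {f : E → ℝ} (hf : ConvexOn ℝ s f) {x y : E}
    (hx : (2 : ℝ) • x ∈ s) (hy : (2 : ℝ) • y ∈ s) :
    f (x + y) ≤ (f ((2 : ℝ) • x) + f ((2 : ℝ) • y)) / 2 := by
  have hmid : (1 / 2 : ℝ) • (2 : ℝ) • x + (1 / 2 : ℝ) • (2 : ℝ) • y = x + y := by
    simp only [smul_smul]; norm_num
  have := hf.2 hx hy (by norm_num : (0 : ℝ) ≤ 1 / 2) (by norm_num : (0 : ℝ) ≤ 1 / 2)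
    (by norm_num)
  rw [hmid, smul_eq_mul, smul_eq_mul] at this
  linarith

namespace MeasureTheory.MeasurePreserving

variable {α β G : Type*} [MeasurableSpace α] [MeasurableSpace β]
  [NormedAddCommGroup G] [NormedSpace ℝ G]

theorem integral_comp_of_aestronglyMeasurable {μ : Measure α} {ν : Measure β} {g : α → β}
    (hg : MeasurePreserving g μ ν) {F : β → G} (hF : AEStronglyMeasurable F ν) :
    ∫ x, F (g x) ∂μ = ∫ y, F y ∂ν := by
  rw [← hg.map_eq] at hF ⊢
  exact (integral_map hg.measurable.aemeasurable hF).symm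

theorem integral_le_of_ae_le_half_add_comp {μ : Measure α} {g : α → α}
    (hg : MeasurePreserving g μ μ) {F H : α → ℝ} (hF : Integrable F μ) (hH : Integrable H μ)
    (hle : ∀ᵐ x ∂μ, H x ≤ (F x + F (g x)) / 2) :
    ∫ x, H x ∂μ ≤ ∫ x, F x ∂μ := by
  have hFg : Integrable (fun x => F (g x)) μ := hg.integrable_comp_of_integrable hF
  calc ∫ x, H x ∂μ ≤ ∫ x, (F x + F (g x)) / 2 ∂μ :=
        integral_mono_ae hH ((hF.add hFg).div_const 2) hle
    _ = (∫ x, F x ∂μ + ∫ x, F (g x) ∂μ) / 2 := by rw [integral_div, integral_add hF hFg]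
    _ = ∫ x, F x ∂μ := by
        rw [hg.integral_comp_of_aestronglyMeasurable hF.aestronglyMeasurable]; ring

end MeasureTheory.MeasurePreserving

theorem ring_diagram_ineq_general {M : Type*} [MeasurableSpace M] (μ : Measure M)
    (g : M → M) (hg : MeasurePreserving g μ μ)
    (Z₁ : M → ℝ) (hZ₁nn : ∀ m, 0 ≤ Z₁ m)
    (f : ℝ → ℝ) (hf : ConvexOn ℝ (Set.Ici 0) f)
    (hint₁ : Integrable (fun m => f (2 * Z₁ m)) μ)
    (hint₂ : Integrable (fun m => f (Z₁ m + Z₁ (g m))) μ) :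
    ∫ m, f (Z₁ m + Z₁ (g m)) ∂μ ≤ ∫ m, f (2 * Z₁ m) ∂μ := by
  have htwice_nonneg (m : M) : (2 : ℝ) • Z₁ m ∈ Set.Ici 0 :=
    Set.mem_Ici.2 (smul_nonneg zero_le_two (hZ₁nn m))
  refine hg.integral_le_of_ae_le_half_add_comp hint₁ hint₂ (ae_of_all _ fun m => ?_)
  simpa only [smul_eq_mul] using
    hf.map_add_le_half_add_two_smul (htwice_nonneg m) (htwice_nonneg (g m))

/-- Non-strict part of Lemma 1: if `g` preserves `μ`, `Z₁ ≥ 0` is integrable, `Z₂ = Z₁ ∘ g`,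
and `f` is convex on `[0,∞)` with `f∘(2Z₁)` and `f∘(Z₁+Z₂)` integrable, then
`∫ f(Z₁+Z₂) dμ ≤ ∫ f(2Z₁) dμ`. -/
theorem ring_diagram_ineq {M : Type*} [MeasurableSpace M] (μ : Measure M)
    (g : M → M) (hg : MeasurePreserving g μ μ)
    (Z₁ : M → ℝ) (hZ₁nn : ∀ m, 0 ≤ Z₁ m) (hZ₁int : Integrable Z₁ μ)
    (f : ℝ → ℝ) (hf : ConvexOn ℝ (Set.Ici 0) f)
    (hint₁ : Integrable (fun m => f (2 * Z₁ m)) μ)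
    (hint₂ : Integrable (fun m => f (Z₁ m + Z₁ (g m))) μ) :
    ∫ m, f (Z₁ m + Z₁ (g m)) ∂μ ≤ ∫ m, f (2 * Z₁ m) ∂μ :=
  ring_diagram_ineq_general μ g hg Z₁ hZ₁nn f hf hint₁ hint₂
end

section
/- For every real η > 0 with η ≠ 1, one has (2√η/(η−1))·arcsin((η−1)/(η+1)) < 1. -/
/-!
With `x = (η - 1)/(η + 1) ∈ (-1, 1)` one has `√(1 - x²) = 2√η/(η + 1)`, so the ratio equals
`arcsin x · √(1 - x²) / x`, an even function of `x`. For `x ∈ (0, 1)` put `θ = arcsin x ∈ (0, π/2)`: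
the ratio is `θ cos θ / sin θ = θ / tan θ < 1`.
-/

open Real

theorem Real.mul_cos_lt_sin {θ : ℝ} (h0 : 0 < θ) (h1 : θ < π / 2) : θ * cos θ < sin θ := by
  have hcos : 0 < cos θ := cos_pos_of_mem_Ioo ⟨by linarith [pi_pos], h1⟩
  have htan := lt_tan h0 h1
  rwa [tan_eq_sin_div_cos, lt_div_iff₀ hcos] at htan

theorem Real.arcsin_mul_sqrt_one_sub_sq_lt {x : ℝ} (h0 : 0 < x) (h1 : x < 1) :
    arcsin x * √(1 - x ^ 2) < x := by
  have key := mul_cos_lt_sin (arcsin_pos.mpr h0) (arcsin_lt_pi_div_two.mpr h1)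
  rwa [cos_arcsin, sin_arcsin (by linarith) h1.le] at key

theorem Real.arcsin_mul_sqrt_one_sub_sq_div_lt_one {x : ℝ} (hx : |x| < 1) (hx0 : x ≠ 0) :
    arcsin x * √(1 - x ^ 2) / x < 1 := by
  have hpos : arcsin |x| * √(1 - |x| ^ 2) / |x| < 1 :=
    (div_lt_one (abs_pos.mpr hx0)).mpr
      (arcsin_mul_sqrt_one_sub_sq_lt (abs_pos.mpr hx0) hx)
  rcases abs_choice x with habs | habs <;> rw [habs] at hpos
  · exact hpos
  · rwa [arcsin_neg, neg_sq, neg_mul, neg_div_neg_eq] at hpos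

theorem Real.sqrt_one_sub_sq_sub_one_div_add_one {η : ℝ} (hη : 0 ≤ η) :
    √(1 - ((η - 1) / (η + 1)) ^ 2) = 2 * √η / (η + 1) := by
  have hη1 : η + 1 ≠ 0 := by positivity
  rw [← sqrt_sq (by positivity : 0 ≤ 2 * √η / (η + 1))]
  congr 1
  field_simp
  rw [sq_sqrt hη]
  ring

/-- The non-interacting IVC susceptibility ratio is strictly less than 1 for anisotropy η ≠ 1:
`(2√η/(η−1))·arcsin((η−1)/(η+1)) < 1`. -/
theorem ivc_susceptibility_lt_valley (η : ℝ) (hη : 0 < η) (hne : η ≠ 1) :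
    (2 * Real.sqrt η / (η - 1)) * Real.arcsin ((η - 1) / (η + 1)) < 1 := by
  have hη1 : η + 1 ≠ 0 := by positivity
  have hη1' : η - 1 ≠ 0 := sub_ne_zero.mpr hne
  set x := (η - 1) / (η + 1) with hx
  have hx_abs : |x| < 1 := by
    rw [abs_lt, lt_div_iff₀ (by linarith), div_lt_one (by linarith)]
    constructor <;> linarith
  have hx0 : x ≠ 0 := div_ne_zero hη1' hη1
  have hratio : (2 * √η / (η - 1)) * arcsin x = arcsin x * √(1 - x ^ 2) / x := by
    rw [hx, sqrt_one_sub_sq_sub_one_div_add_one hη.le]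
    field_simp
  rw [hratio]
  exact arcsin_mul_sqrt_one_sub_sq_div_lt_one hx_abs hx0
end

section
/- Fix m > 0, η > 0, and 0 < E_F < W. Define ε_X(k) = (k₁²/√η + k₂²·√η)/(2m) and ε_Y(k) = (k₁²·√η + k₂²/√η)/(2m) on ℝ². Then ∫_{{k ∈ ℝ² : 2E_F ≤ ε_X(k) + ε_Y(k) ≤ 2W}} (1/(ε_X(k) + ε_Y(k))) dk/(2π)² = (m/(4π)) · (2/(√η + 1/√η)) · log(W/E_F). -/
/-!
The pair energy `ε_X(k) + ε_Y(k) = c |k|²`, with `c = (√η + 1/√η)/(2m)`, is isotropic. In polar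
coordinates `d²k = π d(|k|²)`, so after the substitution `u = c |k|²` the integral becomes
`(π/c) (2π)⁻² ∫_{2E_F}^{2W} du/u = (π/c) (2π)⁻² log (W/E_F)`; the anisotropy enters only through
`c`, which exceeds the isotropic value `1/m` by the factor `(√η + 1/√η)/2`.
-/

open MeasureTheory

/-- Valley-`X` dispersion `ε_X(k) = (k₁²/√η + k₂²√η)/(2m)`. -/
noncomputable def epsX (m η : ℝ) (k : ℝ × ℝ) : ℝ :=
  (k.1 ^ 2 / Real.sqrt η + k.2 ^ 2 * Real.sqrt η) / (2 * m)

/-- Valley-`Y` dispersion `ε_Y(k) = (k₁²√η + k₂²/√η)/(2m)`. -/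
noncomputable def epsY (m η : ℝ) (k : ℝ × ℝ) : ℝ :=
  (k.1 ^ 2 * Real.sqrt η + k.2 ^ 2 / Real.sqrt η) / (2 * m)

open Set Real

theorem polarCoord_symm_sq_add_sq (p : ℝ × ℝ) :
    (polarCoord.symm p).1 ^ 2 + (polarCoord.symm p).2 ^ 2 = p.1 ^ 2 := by
  simp only [polarCoord_symm_apply]
  linear_combination p.1 ^ 2 * sin_sq_add_cos_sq p.2

theorem integral_comp_sq_add_sq {E : Type*} [NormedAddCommGroup E] [NormedSpace ℝ E]
    (g : ℝ → E) : ∫ k : ℝ × ℝ, g (k.1 ^ 2 + k.2 ^ 2) = π • ∫ t in Ioi 0, g t := by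
  rw [← integral_comp_polarCoord_symm]
  simp_rw [polarCoord_symm_sq_add_sq]
  have hsubst : ∫ t in Ioi (0 : ℝ), g t = (2 : ℝ) • ∫ r in Ioi (0 : ℝ), r • g (r ^ 2) := by
    rw [← integral_comp_rpow_Ioi_of_pos two_pos, ← integral_smul]
    norm_num [smul_smul, rpow_two]
  rw [polarCoord_target, Measure.volume_eq_prod, ← Measure.prod_restrict,
    integral_fun_fst (fun r : ℝ => r • g (r ^ 2)), hsubst, measureReal_restrict_apply_univ,
    volume_real_Ioo_of_le (by linarith [pi_pos]), smul_smul]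
  ring_nf

theorem setIntegral_comp_mul_sq_add_sq_shell {E : Type*} [NormedAddCommGroup E] [NormedSpace ℝ E]
    (f : ℝ → E) {a b c : ℝ} (ha : 0 < a) (hc : 0 < c) :
    ∫ k in {k : ℝ × ℝ | a ≤ c * (k.1 ^ 2 + k.2 ^ 2) ∧ c * (k.1 ^ 2 + k.2 ^ 2) ≤ b},
        f (c * (k.1 ^ 2 + k.2 ^ 2))
      = (π / c) • ∫ u in Icc a b, f u := by
  have hS : MeasurableSet
      {k : ℝ × ℝ | a ≤ c * (k.1 ^ 2 + k.2 ^ 2) ∧ c * (k.1 ^ 2 + k.2 ^ 2) ≤ b} :=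
    measurableSet_Icc.preimage
      (by fun_prop : Measurable fun k : ℝ × ℝ => c * (k.1 ^ 2 + k.2 ^ 2))
  have hsub : Icc a b ⊆ Ioi 0 := fun u hu => ha.trans_le hu.1
  calc _ = ∫ k : ℝ × ℝ, (Icc a b).indicator f (c * (k.1 ^ 2 + k.2 ^ 2)) := by
        rw [← integral_indicator hS]
        rfl
    _ = π • c⁻¹ • ∫ u in Ioi 0, (Icc a b).indicator f u := by
        rw [integral_comp_sq_add_sq (fun t => (Icc a b).indicator f (c * t)),
          integral_comp_mul_left_Ioi _ _ hc, mul_zero]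
    _ = (π / c) • ∫ u in Icc a b, f u := by
        rw [setIntegral_indicator measurableSet_Icc,
          inter_eq_right.mpr hsub, smul_smul, div_eq_mul_inv]

theorem epsX_add_epsY (m η : ℝ) (k : ℝ × ℝ) :
    epsX m η k + epsY m η k = (√η + 1 / √η) / (2 * m) * (k.1 ^ 2 + k.2 ^ 2) := by
  simp only [epsX, epsY]
  ring

/-- Inter-valley particle–particle susceptibility (hard UV cutoff):
`∫_{2E_F ≤ ε_X + ε_Y ≤ 2W} dk/(2π)² · 1/(ε_X + ε_Y)
  = (m/(4π))·(2/(√η + 1/√η))·log(W/E_F)`. -/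
theorem intervalley_pp_susceptibility (m η EF W : ℝ)
    (hm : 0 < m) (hη : 0 < η) (hEF : 0 < EF) (hW : EF < W) :
    ∫ k in {k : ℝ × ℝ | 2 * EF ≤ epsX m η k + epsY m η k ∧ epsX m η k + epsY m η k ≤ 2 * W},
        (1 / (epsX m η k + epsY m η k)) / (2 * Real.pi) ^ 2
      = (m / (4 * Real.pi)) * (2 / (Real.sqrt η + 1 / Real.sqrt η)) * Real.log (W / EF) := by
  have hs : 0 < √η := sqrt_pos.mpr hη
  simp_rw [epsX_add_epsY]
  rw [setIntegral_comp_mul_sq_add_sq_shell (fun u => 1 / u / (2 * π) ^ 2) (by positivity)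
      (by positivity), integral_div, integral_Icc_eq_integral_Ioc,
    ← intervalIntegral.integral_of_le (by linarith), integral_one_div_of_pos (by positivity)
      (by linarith), mul_div_mul_left _ _ two_ne_zero, smul_eq_mul]
  field_simp
  ring
end

section
/- Fix 0 < η < 1 and φ ∈ (0, π/2). Then ∫_φ^{φ+π} (dθ/π) · sin(θ − φ)/√(cos²θ/√η + sin²θ·√η) = (2/π)·[ η^{−1/4}·cos φ·arsinh(√(1/η − 1)·cos φ)/√(1/η − 1) + η^{1/4}·sin φ·arcsin(√(1 − η)·sin φ)/√(1 − η) ]. -/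
/-!
With `A = η^(-1/2) > B = η^(1/2)` the radicand is `R = A cos²θ + B sin²θ`, and
`R = B (1 + (A-B)/B · cos²θ) = A (1 - (A-B)/A · sin²θ)`. Hence `sin θ / √R` and `cos θ / √R`
are, up to the factor `√(A-B)`, the derivatives of `-arsinh (√((A-B)/B) cos θ)` and
`arcsin (√((A-B)/A) sin θ)`. Expanding `sin (θ - φ)` gives an antiderivative of the integrand,
and the shift `θ ↦ θ + π` flips the sign of both terms.
-/

open Real

section Radicand

variable {A B : ℝ}

lemma cos_sq_mul_add_sin_sq_mul_pos (hB : 0 < B) (hBA : B ≤ A) (θ : ℝ) :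
    0 < cos θ ^ 2 * A + sin θ ^ 2 * B := by
  nlinarith [sin_sq_add_cos_sq θ, sq_nonneg (cos θ)]

lemma hasDerivAt_arsinh_mul_cos (hB : 0 < B) (hBA : B ≤ A) (θ : ℝ) :
    HasDerivAt (fun t => arsinh (√((A - B) / B) * cos t))
      (-√(A - B) * sin θ / √(cos θ ^ 2 * A + sin θ ^ 2 * B)) θ := by
  have hR := cos_sq_mul_add_sin_sq_mul_pos hB hBA θ
  have h := (hasDerivAt_arsinh _).comp θ ((hasDerivAt_cos θ).const_mul √((A - B) / B))
  refine h.congr_deriv ?_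
  have hsplit : 1 + (√((A - B) / B) * cos θ) ^ 2 = (cos θ ^ 2 * A + sin θ ^ 2 * B) / B := by
    rw [mul_pow, sq_sqrt (div_nonneg (sub_nonneg.2 hBA) hB.le)]
    field_simp
    linear_combination -B * sin_sq_add_cos_sq θ
  rw [hsplit, sqrt_div hR.le, sqrt_div (sub_nonneg.2 hBA)]
  field_simp

lemma hasDerivAt_arcsin_mul_sin (hB : 0 < B) (hBA : B ≤ A) (θ : ℝ) :
    HasDerivAt (fun t => arcsin (√((A - B) / A) * sin t))
      (√(A - B) * cos θ / √(cos θ ^ 2 * A + sin θ ^ 2 * B)) θ := by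
  have hA : 0 < A := hB.trans_le hBA
  have hR := cos_sq_mul_add_sin_sq_mul_pos hB hBA θ
  have hsplit : 1 - (√((A - B) / A) * sin θ) ^ 2 = (cos θ ^ 2 * A + sin θ ^ 2 * B) / A := by
    rw [mul_pow, sq_sqrt (div_nonneg (sub_nonneg.2 hBA) hA.le)]
    field_simp
    linear_combination -A * sin_sq_add_cos_sq θ
  have hlt : (√((A - B) / A) * sin θ) ^ 2 < 1 := by
    rw [← sub_pos, hsplit]; positivity
  have habs := abs_lt.1 ((sq_lt_one_iff_abs_lt_one _).1 hlt)
  have h := (hasDerivAt_arcsin habs.1.ne' habs.2.ne).comp θ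
    ((hasDerivAt_sin θ).const_mul √((A - B) / A))
  refine h.congr_deriv ?_
  rw [hsplit, sqrt_div hR.le, sqrt_div (sub_nonneg.2 hBA)]
  field_simp

end Radicand

theorem integral_sin_sub_div_sqrt_cos_sq_mul_add_sin_sq_mul {A B : ℝ} (hB : 0 < B) (hBA : B < A)
    (φ : ℝ) :
    ∫ θ in φ..φ + π, sin (θ - φ) / √(cos θ ^ 2 * A + sin θ ^ 2 * B) =
      2 * (cos φ * arsinh (√((A - B) / B) * cos φ)
        + sin φ * arcsin (√((A - B) / A) * sin φ)) / √(A - B) := by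
  have hk : 0 < √(A - B) := sqrt_pos.2 (sub_pos.2 hBA)
  have hderiv : ∀ θ ∈ Set.uIcc φ (φ + π), HasDerivAt
      (fun t => -(cos φ * arsinh (√((A - B) / B) * cos t)
        + sin φ * arcsin (√((A - B) / A) * sin t)) / √(A - B))
      (sin (θ - φ) / √(cos θ ^ 2 * A + sin θ ^ 2 * B)) θ := by
    intro θ _
    refine ((((hasDerivAt_arsinh_mul_cos hB hBA.le θ).const_mul (cos φ)).add
      ((hasDerivAt_arcsin_mul_sin hB hBA.le θ).const_mul (sin φ))).neg.div_const _).congr_deriv ?_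
    rw [sin_sub]
    field_simp
    ring
  have hcont : Continuous fun θ => sin (θ - φ) / √(cos θ ^ 2 * A + sin θ ^ 2 * B) := by
    fun_prop (disch := exact fun θ =>
      (sqrt_pos.2 (cos_sq_mul_add_sin_sq_mul_pos hB hBA.le θ)).ne')
  rw [intervalIntegral.integral_eq_sub_of_hasDerivAt hderiv (hcont.intervalIntegrable _ _)]
  simp only [cos_add_pi, sin_add_pi, mul_neg, arsinh_neg, arcsin_neg]
  ring

theorem angular_s_function_eval_general (η φ : ℝ) (hη0 : 0 < η) (hη1 : η < 1) :
    ∫ θ in φ..(φ + Real.pi),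
        (1 / Real.pi) * (Real.sin (θ - φ) /
          Real.sqrt (Real.cos θ ^ 2 / Real.sqrt η + Real.sin θ ^ 2 * Real.sqrt η))
      = (2 / Real.pi) *
          (η ^ (-(1 : ℝ) / 4) * Real.cos φ *
              Real.arsinh (Real.sqrt (1 / η - 1) * Real.cos φ) / Real.sqrt (1 / η - 1)
            + η ^ ((1 : ℝ) / 4) * Real.sin φ *
                Real.arcsin (Real.sqrt (1 - η) * Real.sin φ) / Real.sqrt (1 - η)) := by
  -- Writing `η = q⁴` turns every root and power of `η` into a monomial in `q`.
  obtain ⟨q, hq, rfl⟩ : ∃ q, 0 < q ∧ η = q ^ 4 :=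
    ⟨η ^ (1 / 4 : ℝ), by positivity, by rw [← rpow_natCast, ← rpow_mul hη0.le]; norm_num⟩
  have hq_lt : q ^ 2 < (q ^ 2)⁻¹ := by
    rw [lt_inv_comm₀ (by positivity) (by positivity), ← one_div, lt_div_iff₀ (by positivity)]
    nlinarith
  have hsqrt : √(q ^ 4) = q ^ 2 := by rw [show q ^ 4 = (q ^ 2) ^ 2 by ring, sqrt_sq (by positivity)]
  have hquarter : (q ^ 4) ^ ((1 : ℝ) / 4) = q := by
    rw [← rpow_natCast, ← rpow_mul hq.le]; norm_num
  have hneg : (q ^ 4) ^ (-(1 : ℝ) / 4) = q⁻¹ := by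
    rw [← rpow_natCast, ← rpow_mul hq.le]; norm_num [rpow_neg_one]
  have hcos : ((q ^ 2)⁻¹ - q ^ 2) / q ^ 2 = 1 / q ^ 4 - 1 := by field_simp
  have hsin : ((q ^ 2)⁻¹ - q ^ 2) / (q ^ 2)⁻¹ = 1 - q ^ 4 := by field_simp
  have hgap : √((q ^ 2)⁻¹ - q ^ 2) = √(1 - q ^ 4) / q := by
    rw [← hsin, sqrt_div (sub_nonneg.2 hq_lt.le), sqrt_inv, sqrt_sq hq.le, div_inv_eq_mul]
    field_simp
  have hcos_sqrt : √(1 / q ^ 4 - 1) = √(1 - q ^ 4) / q ^ 2 := by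
    rw [← hcos, sqrt_div (sub_nonneg.2 hq_lt.le), sqrt_sq hq.le, hgap]
    field_simp
  simp_rw [intervalIntegral.integral_const_mul, hsqrt, div_eq_mul_inv (cos _ ^ 2),
    integral_sin_sub_div_sqrt_cos_sq_mul_add_sin_sq_mul (by positivity) hq_lt, hquarter, hneg,
    hcos, hsin, hgap, hcos_sqrt]
  field_simp

/-- Closed form for the angular function `𝔰(φ;η)` in the Kohn–Luttinger anomalous
contribution, for `0 < η < 1` and `φ ∈ (0, π/2)`:
`∫_φ^{φ+π} (dθ/π) sin(θ−φ)/√(cos²θ/√η + sin²θ·√η)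
  = (2/π)[η^{−1/4} cos φ · arsinh(√(1/η−1) cos φ)/√(1/η−1)
          + η^{1/4} sin φ · arcsin(√(1−η) sin φ)/√(1−η)]`. -/
theorem angular_s_function_eval (η φ : ℝ) (hη0 : 0 < η) (hη1 : η < 1)
    (hφ0 : 0 < φ) (hφ : φ < Real.pi / 2) :
    ∫ θ in φ..(φ + Real.pi),
        (1 / Real.pi) * (Real.sin (θ - φ) /
          Real.sqrt (Real.cos θ ^ 2 / Real.sqrt η + Real.sin θ ^ 2 * Real.sqrt η))
      = (2 / Real.pi) *
          (η ^ (-(1 : ℝ) / 4) * Real.cos φ *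
              Real.arsinh (Real.sqrt (1 / η - 1) * Real.cos φ) / Real.sqrt (1 / η - 1)
            + η ^ ((1 : ℝ) / 4) * Real.sin φ *
                Real.arcsin (Real.sqrt (1 - η) * Real.sin φ) / Real.sqrt (1 - η)) :=
  angular_s_function_eval_general η φ hη0 hη1
end

section
/- One has (2/π)·∫₀^∞ ∫₀^∞ ( 1 − Re(√((x + iy)² − 1))/x )² dx dy = 1 − log 2, where √ denotes the principal branch of the complex square root and Re the real part. -/
/-!
Substitute `z = cosh w`: `cosh` maps the half-strip `0 < Re w, 0 < Im w < π/2` bijectively onto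
the open first quadrant, with inverse `z ↦ log (z + √(z² - 1))`. On the half-strip
`√(cosh² w - 1) = sinh w`, so the integrand `(1 - Re √(z² - 1) / Re z)²` becomes
`(1 - tanh u)²` with `u = Re w`, and the real Jacobian of `cosh` is
`|sinh w|² = sinh² u + sin² v`. Integrating over `v ∈ (0, π/2)` leaves
`(π/2) ∫₀^∞ (sinh² u + 1/2) (1 - tanh u)² du`; in the variable `t = e^{-2u}` the integrand is
`t (1 + t²) / (1 + t)²`, with primitive `-t/2 + log (1 + t) + 1/(1 + t)`, which runs from
`log 2` at `u = 0` to `1` at `u = ∞`.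
-/

open Complex Set MeasureTheory Filter Topology
open scoped Real

noncomputable section

namespace Complex

theorem cosh_re (w : ℂ) : (cosh w).re = Real.cosh w.re * Real.cos w.im := by
  obtain ⟨u, v, rfl⟩ : ∃ u v : ℝ, w = u + v * I := ⟨w.re, w.im, (re_add_im w).symm⟩
  simp [cosh_add, cosh_mul_I, sinh_mul_I, ← ofReal_cosh, ← ofReal_sinh, ← ofReal_cos, ← ofReal_sin]

theorem cosh_im (w : ℂ) : (cosh w).im = Real.sinh w.re * Real.sin w.im := by
  obtain ⟨u, v, rfl⟩ : ∃ u v : ℝ, w = u + v * I := ⟨w.re, w.im, (re_add_im w).symm⟩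
  simp [cosh_add, cosh_mul_I, sinh_mul_I, ← ofReal_cosh, ← ofReal_sinh, ← ofReal_cos, ← ofReal_sin]

theorem sinh_re (w : ℂ) : (sinh w).re = Real.sinh w.re * Real.cos w.im := by
  obtain ⟨u, v, rfl⟩ : ∃ u v : ℝ, w = u + v * I := ⟨w.re, w.im, (re_add_im w).symm⟩
  simp [sinh_add, cosh_mul_I, sinh_mul_I, ← ofReal_cosh, ← ofReal_sinh, ← ofReal_cos, ← ofReal_sin]

theorem sinh_im (w : ℂ) : (sinh w).im = Real.cosh w.re * Real.sin w.im := by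
  obtain ⟨u, v, rfl⟩ : ∃ u v : ℝ, w = u + v * I := ⟨w.re, w.im, (re_add_im w).symm⟩
  simp [sinh_add, cosh_mul_I, sinh_mul_I, ← ofReal_cosh, ← ofReal_sinh, ← ofReal_cos, ← ofReal_sin]

theorem normSq_sinh (w : ℂ) : normSq (sinh w) = Real.sinh w.re ^ 2 + Real.sin w.im ^ 2 := by
  rw [normSq_apply, sinh_re, sinh_im]
  linear_combination Real.sin w.im ^ 2 * Real.cosh_sq w.re
    + Real.sinh w.re ^ 2 * Real.sin_sq_add_cos_sq w.im

theorem cpow_one_half_sq (z : ℂ) : (z ^ (1 / 2 : ℂ)) ^ 2 = z := by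
  rw [one_div]
  exact cpow_ofNat_inv_pow z 2

theorem cpow_one_half_re_pos_and_im_pos {c : ℂ} (hc : 0 < c.im) :
    0 < (c ^ (1 / 2 : ℂ)).re ∧ 0 < (c ^ (1 / 2 : ℂ)).im := by
  have hre : 0 ≤ (c ^ (1 / 2 : ℂ)).re := by
    rw [one_div, cpow_inv_two_re]
    exact Real.sqrt_nonneg _
  set s := c ^ (1 / 2 : ℂ)
  have him : 0 < s.re * s.im := by
    have := congrArg im (cpow_one_half_sq c)
    rw [sq, mul_im] at this
    linarith
  exact ⟨lt_of_le_of_ne hre fun h => by rw [← h, zero_mul] at him; exact him.false,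
    pos_of_mul_pos_right him hre⟩

theorem cosh_sq_sub_one_cpow_one_half {w : ℂ} (hw : 0 < (sinh w).re) :
    (cosh w ^ 2 - 1) ^ (1 / 2 : ℂ) = sinh w := by
  rw [cosh_sq, add_sub_cancel_right, one_div, sq_cpow_two_inv hw]

theorem det_restrictScalars_smulRight (c : ℂ) :
    ((ContinuousLinearMap.smulRight (1 : ℂ →L[ℂ] ℂ) c).restrictScalars ℝ).det = normSq c := by
  simp [ContinuousLinearMap.det, LinearMap.det_restrictScalars, Algebra.norm_complex_apply]

theorem hasFDerivAt_cosh_restrictScalars (w : ℂ) :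
    HasFDerivAt cosh ((ContinuousLinearMap.smulRight (1 : ℂ →L[ℂ] ℂ) (sinh w)).restrictScalars ℝ)
      w :=
  (hasDerivAt_cosh w).hasFDerivAt.restrictScalars ℝ

end Complex

@[fun_prop]
theorem Real.continuous_tanh : Continuous Real.tanh := by
  rw [funext Real.tanh_eq_sinh_div_cosh]
  exact Real.continuous_sinh.div Real.continuous_cosh fun x => (Real.cosh_pos x).ne'

section ReProdIm

variable {E : Type*} [NormedAddCommGroup E] {f : ℂ → E} {s t : Set ℝ}

theorem integrableOn_reProdIm_iff :
    IntegrableOn f (s ×ℂ t) ↔ IntegrableOn (fun p : ℝ × ℝ => f (p.1 + p.2 * I)) (s ×ˢ t) := by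
  rw [← volume_preserving_equiv_real_prod.symm.integrableOn_comp_preimage
    measurableEquivRealProd.symm.measurableEmbedding]
  simp only [Function.comp_def, measurableEquivRealProd_symm_apply, mk_eq_add_mul_I]
  rfl

variable [NormedSpace ℝ E]

theorem setIntegral_reProdIm_eq_setIntegral_prod :
    ∫ z in s ×ℂ t, f z = ∫ p in s ×ˢ t, f (p.1 + p.2 * I) := by
  rw [← volume_preserving_equiv_real_prod.symm.setIntegral_preimage_emb
    measurableEquivRealProd.symm.measurableEmbedding]
  simp only [measurableEquivRealProd_symm_apply, mk_eq_add_mul_I]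
  rfl

theorem setIntegral_reProdIm (hf : IntegrableOn f (s ×ℂ t)) :
    ∫ z in s ×ℂ t, f z = ∫ x in s, ∫ y in t, f (x + y * I) := by
  rw [integrableOn_reProdIm_iff, IntegrableOn, Measure.volume_eq_prod] at hf
  rw [setIntegral_reProdIm_eq_setIntegral_prod, Measure.volume_eq_prod, setIntegral_prod _ hf]

theorem setIntegral_reProdIm_symm (hf : IntegrableOn f (s ×ℂ t)) :
    ∫ z in s ×ℂ t, f z = ∫ y in t, ∫ x in s, f (x + y * I) := by
  rw [integrableOn_reProdIm_iff, IntegrableOn, Measure.volume_eq_prod,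
    ← Measure.prod_restrict] at hf
  rw [setIntegral_reProdIm_eq_setIntegral_prod, Measure.volume_eq_prod, ← Measure.prod_restrict,
    integral_prod_symm _ hf]

end ReProdIm

section HalfStrip

def halfStrip : Set ℂ := Ioi 0 ×ℂ Ioo 0 (π / 2)

def firstQuadrant : Set ℂ := Ioi 0 ×ℂ Ioi 0

def arcosh (z : ℂ) : ℂ := log (z + (z ^ 2 - 1) ^ (1 / 2 : ℂ))

theorem mem_halfStrip {w : ℂ} : w ∈ halfStrip ↔ 0 < w.re ∧ 0 < w.im ∧ w.im < π / 2 := Iff.rfl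

theorem mem_firstQuadrant {z : ℂ} : z ∈ firstQuadrant ↔ 0 < z.re ∧ 0 < z.im := Iff.rfl

theorem measurableSet_halfStrip : MeasurableSet halfStrip :=
  (measurable_re measurableSet_Ioi).inter (measurable_im measurableSet_Ioo)

theorem cos_im_pos_of_mem_halfStrip {w : ℂ} (hw : w ∈ halfStrip) : 0 < Real.cos w.im := by
  obtain ⟨-, hv, hv'⟩ := mem_halfStrip.1 hw
  exact Real.cos_pos_of_mem_Ioo ⟨by linarith, hv'⟩

theorem sinh_re_pos_of_mem_halfStrip {w : ℂ} (hw : w ∈ halfStrip) : 0 < (sinh w).re := by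
  rw [sinh_re]
  exact mul_pos (Real.sinh_pos_iff.2 (mem_halfStrip.1 hw).1) (cos_im_pos_of_mem_halfStrip hw)

theorem cosh_mem_firstQuadrant {w : ℂ} (hw : w ∈ halfStrip) : cosh w ∈ firstQuadrant := by
  obtain ⟨hu, hv, hv'⟩ := mem_halfStrip.1 hw
  rw [mem_firstQuadrant, cosh_re, cosh_im]
  exact ⟨mul_pos (Real.cosh_pos _) (cos_im_pos_of_mem_halfStrip hw),
    mul_pos (Real.sinh_pos_iff.2 hu) (Real.sin_pos_of_pos_of_lt_pi hv (by linarith))⟩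

theorem arcosh_cosh {w : ℂ} (hw : w ∈ halfStrip) : arcosh (cosh w) = w := by
  obtain ⟨-, hv, hv'⟩ := mem_halfStrip.1 hw
  rw [arcosh, cosh_sq_sub_one_cpow_one_half (sinh_re_pos_of_mem_halfStrip hw), cosh_add_sinh,
    log_exp (by linarith [Real.pi_pos]) (by linarith [Real.pi_pos])]

theorem cosh_arcosh (z : ℂ) : cosh (arcosh z) = z := by
  set s := (z ^ 2 - 1) ^ (1 / 2 : ℂ)
  have hinv : (z + s) * (z - s) = 1 := by linear_combination -cpow_one_half_sq (z ^ 2 - 1)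
  rw [arcosh, ← mul_right_inj' (two_ne_zero' ℂ), two_cosh, exp_neg,
    exp_log (left_ne_zero_of_mul_eq_one hinv), inv_eq_of_mul_eq_one_right hinv]
  ring

theorem arcosh_mem_halfStrip {z : ℂ} (hz : z ∈ firstQuadrant) : arcosh z ∈ halfStrip := by
  obtain ⟨hx, hy⟩ := mem_firstQuadrant.1 hz
  set s := (z ^ 2 - 1) ^ (1 / 2 : ℂ)
  obtain ⟨hsre, hsim⟩ : 0 < s.re ∧ 0 < s.im := by
    refine cpow_one_half_re_pos_and_im_pos ?_
    simp only [sub_im, one_im, sub_zero, sq, mul_im]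
    nlinarith
  -- `(z + s) (z - s) = 1`, and `|z + s| > |z - s|` because `Re (z * conj s) > 0`.
  have hnorm : 1 < normSq (z + s) := by
    have hinv : (z + s) * (z - s) = 1 := by linear_combination -cpow_one_half_sq (z ^ 2 - 1)
    have hprod : normSq (z + s) * normSq (z - s) = 1 := by rw [← map_mul, hinv, map_one]
    have hdiff : normSq (z + s) - normSq (z - s) = 4 * (z.re * s.re + z.im * s.im) := by
      simp only [normSq_apply, add_re, add_im, sub_re, sub_im]
      ring
    nlinarith [normSq_nonneg (z - s), mul_pos hx hsre, mul_pos hy hsim]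
  have hre : 0 < (z + s).re := by rw [add_re]; linarith
  have him : 0 < (z + s).im := by rw [add_im]; linarith
  rw [mem_halfStrip, arcosh, log_re, log_im]
  refine ⟨Real.log_pos ?_, ?_, arg_lt_pi_div_two_iff.2 (Or.inl hre)⟩
  · rw [← sq_lt_sq₀ zero_le_one (norm_nonneg _), one_pow, ← normSq_eq_norm_sq]
    exact hnorm
  · exact lt_of_le_of_ne (arg_nonneg_iff.2 him.le) fun h => him.ne' (arg_eq_zero_iff.1 h.symm).2

theorem bijOn_cosh_halfStrip : BijOn cosh halfStrip firstQuadrant :=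
  InvOn.bijOn ⟨fun _ hw => arcosh_cosh hw, fun z _ => cosh_arcosh z⟩
    (fun _ => cosh_mem_firstQuadrant) (fun _ => arcosh_mem_halfStrip)

end HalfStrip

section RadialIntegral

def tanhPrimitive (t : ℝ) : ℝ := -t / 2 + Real.log (1 + t) + 1 / (1 + t)

theorem sinh_sq_add_half_mul_one_sub_tanh_sq_eq (u : ℝ) :
    (Real.sinh u ^ 2 + 1 / 2) * (1 - Real.tanh u) ^ 2 =
      Real.exp (-2 * u) * (1 + Real.exp (-2 * u) ^ 2) / (1 + Real.exp (-2 * u)) ^ 2 := by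
  have he : Real.exp (-2 * u) = (Real.exp u ^ 2)⁻¹ := by
    rw [← Real.exp_nat_mul, ← Real.exp_neg]
    ring_nf
  have hpos := Real.exp_pos u
  rw [Real.tanh_eq_sinh_div_cosh, Real.sinh_eq, Real.cosh_eq, Real.exp_neg, he]
  field_simp
  ring

theorem hasDerivAt_tanhPrimitive_exp (u : ℝ) :
    HasDerivAt (fun u => tanhPrimitive (Real.exp (-2 * u)))
      ((Real.sinh u ^ 2 + 1 / 2) * (1 - Real.tanh u) ^ 2) u := by
  set t := Real.exp (-2 * u) with ht_def
  have ht : 0 < 1 + t := by positivity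
  have hexp : HasDerivAt (fun u => Real.exp (-2 * u)) (-2 * t) u :=
    (((hasDerivAt_id u).const_mul (-2)).exp).congr_deriv (by simp [t]; ring)
  have hsucc : HasDerivAt (fun t : ℝ => 1 + t) 1 t := (hasDerivAt_id t).const_add 1
  have hprim : HasDerivAt tanhPrimitive (-1 / 2 + 1 / (1 + t) - 1 / (1 + t) ^ 2) t :=
    ((((hasDerivAt_id t).neg.div_const 2).add (hsucc.log ht.ne')).add
      ((hasDerivAt_const t (1 : ℝ)).div hsucc ht.ne')).congr_deriv (by field_simp; ring)
  refine (hprim.comp u hexp).congr_deriv ?_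
  rw [sinh_sq_add_half_mul_one_sub_tanh_sq_eq, ← ht_def]
  field_simp
  ring

theorem tendsto_tanhPrimitive_exp :
    Tendsto (fun u => tanhPrimitive (Real.exp (-2 * u))) atTop (𝓝 1) := by
  have hexp : Tendsto (fun u : ℝ => Real.exp (-2 * u)) atTop (𝓝 0) :=
    Real.tendsto_exp_atBot.comp (tendsto_id.const_mul_atTop_of_neg (by norm_num))
  have hcont : ContinuousAt tanhPrimitive 0 := by
    unfold tanhPrimitive
    fun_prop (disch := norm_num)
  have h0 : tanhPrimitive 0 = 1 := by norm_num [tanhPrimitive]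
  rw [← h0]
  exact hcont.tendsto.comp hexp

theorem integrableOn_sinh_sq_add_half_mul_one_sub_tanh_sq :
    IntegrableOn (fun u => (Real.sinh u ^ 2 + 1 / 2) * (1 - Real.tanh u) ^ 2) (Ioi 0) :=
  integrableOn_Ioi_deriv_of_nonneg' (fun u _ => hasDerivAt_tanhPrimitive_exp u)
    (fun _ _ => by positivity) tendsto_tanhPrimitive_exp

theorem integral_sinh_sq_add_half_mul_one_sub_tanh_sq :
    ∫ u in Ioi 0, (Real.sinh u ^ 2 + 1 / 2) * (1 - Real.tanh u) ^ 2 = 1 - Real.log 2 := by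
  rw [integral_Ioi_of_hasDerivAt_of_nonneg' (fun u _ => hasDerivAt_tanhPrimitive_exp u)
    (fun _ _ => by positivity) tendsto_tanhPrimitive_exp]
  norm_num [tanhPrimitive]

theorem integral_Ioo_add_sin_sq_mul (a b : ℝ) :
    ∫ v in Ioo 0 (π / 2), (a + Real.sin v ^ 2) * b = π / 2 * ((a + 1 / 2) * b) := by
  rw [integral_mul_const, ← integral_Ioc_eq_integral_Ioo,
    ← intervalIntegral.integral_of_le (by positivity),
    intervalIntegral.integral_add (f := fun _ => a) (g := fun v => Real.sin v ^ 2)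
      intervalIntegrable_const ((Real.continuous_sin.pow 2).intervalIntegrable _ _),
    intervalIntegral.integral_const, integral_sin_sq]
  simp
  ring

end RadialIntegral

section Pullback

theorem integrableOn_halfStrip_sinh_sq_add_sin_sq_mul :
    IntegrableOn (fun w : ℂ => (Real.sinh w.re ^ 2 + Real.sin w.im ^ 2) * (1 - Real.tanh w.re) ^ 2)
      halfStrip := by
  rw [halfStrip, integrableOn_reProdIm_iff, IntegrableOn, Measure.volume_eq_prod,
    ← Measure.prod_restrict]
  simp only [add_re, ofReal_re, mul_I_re, ofReal_im, neg_zero, add_zero, add_im, mul_I_im, zero_add]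
  have hcont : Continuous fun p : ℝ × ℝ =>
      (Real.sinh p.1 ^ 2 + Real.sin p.2 ^ 2) * (1 - Real.tanh p.1) ^ 2 := by fun_prop
  refine (integrable_prod_iff hcont.aestronglyMeasurable).2 ⟨ae_of_all _ fun u => ?_, ?_⟩
  · exact (hcont.comp (Continuous.prodMk_right u)).integrableOn_Icc.mono_set Ioo_subset_Icc_self
  · have hnonneg : ∀ u v : ℝ, 0 ≤ (Real.sinh u ^ 2 + Real.sin v ^ 2) * (1 - Real.tanh u) ^ 2 :=
      fun _ _ => by positivity
    simp only [Real.norm_eq_abs, abs_of_nonneg (hnonneg _ _), integral_Ioo_add_sin_sq_mul]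
    exact integrableOn_sinh_sq_add_half_mul_one_sub_tanh_sq.const_mul _

theorem integral_halfStrip_sinh_sq_add_sin_sq_mul :
    ∫ w in halfStrip, (Real.sinh w.re ^ 2 + Real.sin w.im ^ 2) * (1 - Real.tanh w.re) ^ 2 =
      π / 2 * (1 - Real.log 2) := by
  rw [halfStrip, setIntegral_reProdIm integrableOn_halfStrip_sinh_sq_add_sin_sq_mul]
  simp only [add_re, ofReal_re, mul_I_re, ofReal_im, neg_zero, add_zero, add_im, mul_I_im, zero_add,
    integral_Ioo_add_sin_sq_mul]
  rw [integral_const_mul, integral_sinh_sq_add_half_mul_one_sub_tanh_sq]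

/-- The dimensionless Lindhard function `Ψ(x, y)` of the paper, at `z = x + iy`. -/
def lindhard (z : ℂ) : ℝ := 1 - ((z ^ 2 - 1) ^ (1 / 2 : ℂ)).re / z.re

theorem lindhard_cosh {w : ℂ} (hw : w ∈ halfStrip) : lindhard (cosh w) = 1 - Real.tanh w.re := by
  rw [lindhard, cosh_sq_sub_one_cpow_one_half (sinh_re_pos_of_mem_halfStrip hw), sinh_re, cosh_re,
    mul_div_mul_right _ _ (cos_im_pos_of_mem_halfStrip hw).ne', Real.tanh_eq_sinh_div_cosh]

theorem abs_det_smul_lindhard_sq_cosh {w : ℂ} (hw : w ∈ halfStrip) :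
    |((ContinuousLinearMap.smulRight (1 : ℂ →L[ℂ] ℂ) (sinh w)).restrictScalars ℝ).det| •
        lindhard (cosh w) ^ 2 =
      (Real.sinh w.re ^ 2 + Real.sin w.im ^ 2) * (1 - Real.tanh w.re) ^ 2 := by
  rw [det_restrictScalars_smulRight, abs_of_nonneg (normSq_nonneg _), normSq_sinh,
    lindhard_cosh hw, smul_eq_mul]

theorem integrableOn_firstQuadrant_lindhard_sq :
    IntegrableOn (fun z => lindhard z ^ 2) firstQuadrant := by
  rw [← bijOn_cosh_halfStrip.image_eq, integrableOn_image_iff_integrableOn_abs_det_fderiv_smul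
    volume measurableSet_halfStrip
    (fun w _ => (hasFDerivAt_cosh_restrictScalars w).hasFDerivWithinAt) bijOn_cosh_halfStrip.injOn]
  exact integrableOn_halfStrip_sinh_sq_add_sin_sq_mul.congr_fun
    (fun w hw => (abs_det_smul_lindhard_sq_cosh hw).symm) measurableSet_halfStrip

theorem integral_firstQuadrant_lindhard_sq :
    ∫ z in firstQuadrant, lindhard z ^ 2 = π / 2 * (1 - Real.log 2) := by
  rw [← bijOn_cosh_halfStrip.image_eq, integral_image_eq_integral_abs_det_fderiv_smul volume
    measurableSet_halfStrip (fun w _ => (hasFDerivAt_cosh_restrictScalars w).hasFDerivWithinAt)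
    bijOn_cosh_halfStrip.injOn, setIntegral_congr_fun measurableSet_halfStrip
    (fun w hw => abs_det_smul_lindhard_sq_cosh hw), integral_halfStrip_sinh_sq_add_sin_sq_mul]

end Pullback

/-- Normalization `𝒟(1) = 1` of the second-order ring-diagram function: for the isotropic 2DEG,
`(2/π)·∫₀^∞∫₀^∞ (1 − Re√((x+iy)² − 1)/x)² dx dy = 1 − log 2`, where `√` is the principal
branch of the complex square root. -/
theorem ring_diagram_normalization :
    (2 / Real.pi) *
        ∫ y in Set.Ioi (0 : ℝ), ∫ x in Set.Ioi (0 : ℝ),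
          (1 - ((((x : ℂ) + Complex.I * (y : ℂ)) ^ 2 - 1) ^ ((1 : ℂ) / 2)).re / x) ^ 2
      = 1 - Real.log 2 := by
  calc _ = (2 / π) * ∫ z in firstQuadrant, lindhard z ^ 2 := by
        rw [firstQuadrant, setIntegral_reProdIm_symm integrableOn_firstQuadrant_lindhard_sq]
        simp only [lindhard, add_re, ofReal_re, mul_I_re, ofReal_im, neg_zero, add_zero]
        simp only [mul_comm _ I]
    _ = 1 - Real.log 2 := by
        rw [integral_firstQuadrant_lindhard_sq]
        field_simp
end
end
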